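/- Let L = J(P) ⊆ 2^[m] be a natural distributive lattice and let G be a graph on [m] that contains the minimal graph of L as a subgraph. Then L, viewed as a subset of the column index set 2^[m] of the matrix A_G, is A_G-feasible. -/

import Mathlib

open scoped BigOperators
attribute [local instance] Classical.propDecidable

noncomputable section

/-- The order ideals of a partial order `P` on `Fin m`. -/
def orderIdeals {m : ℕ} (P : PartialOrder (Fin m)) : Set (Finset (Fin m)) :=
  {S | ∀ t ∈ S, ∀ s, P.le s t → s ∈ S}

/-- `i` covers `j` in the partial order `P`. -/
def Covers {m : ℕ} (P : PartialOrder (Fin m)) (i j : Fin m) : Prop :=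
  P.lt j i ∧ ∀ r, ¬ (P.lt j r ∧ P.lt r i)

/-- The minimal graph of a natural lattice `L = J(P)`: edges are the cover relations of `P`. -/
def minimalGraph {m : ℕ} (P : PartialOrder (Fin m)) : SimpleGraph (Fin m) where
  Adj i j := Covers P i j ∨ Covers P j i
  symm := by constructor; intro i j h; tauto
  loopless := by
    constructor; intro i h
    rcases h with h | h <;>
      exact (@lt_irrefl _ P.toPreorder i) h.1

/-- `S` is a maximal clique of `G`. -/
def IsMaxClique {m : ℕ} (G : SimpleGraph (Fin m)) (S : Finset (Fin m)) : Prop :=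
  G.IsClique (S : Set (Fin m)) ∧
    ∀ T : Finset (Fin m), G.IsClique (T : Set (Fin m)) → S ⊆ T → T = S

/-- The row index set of the matrix `A_G`: pairs `(S, T)` with `S` a maximal clique of `G`
and `T ⊆ S`. -/
def MaxCliquePairs {m : ℕ} (G : SimpleGraph (Fin m)) : Type :=
  {ST : Finset (Fin m) × Finset (Fin m) // IsMaxClique G ST.1 ∧ ST.2 ⊆ ST.1}

/-- The matrix `A_G` of the standard parametrization of the graphical model: the entry in
row `(S, T)` and column `U` is `1` if `U ∩ S = T` and `0` otherwise. -/
def standardMatrix {m : ℕ} (G : SimpleGraph (Fin m)) :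
    MaxCliquePairs G → Finset (Fin m) → ℕ :=
  fun ST U => if U ∩ ST.1.1 = ST.1.2 then 1 else 0

/-- `F` is `A`-feasible for a nonnegative integer matrix `A` with rows indexed by `ι` and
columns indexed by `κ`. -/
def AFeasibleGen {ι κ : Type*} (A : ι → κ → ℕ) (F : Set κ) : Prop :=
  ∀ j ∉ F, ¬ ({i | A i j ≠ 0} ⊆ ⋃ k ∈ F, {i | A i k ≠ 0})

lemma exists_cover_cross {m : ℕ} (P : PartialOrder (Fin m)) (U : Finset (Fin m)) :
    ∀ n s t, (Finset.univ.filter (fun x => P.lt s x ∧ P.lt x t)).card ≤ n →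
      P.lt s t → s ∉ U → t ∈ U → ∃ a b, Covers P b a ∧ a ∉ U ∧ b ∈ U := by
  intro n
  induction n with
  | zero =>
    intro s t hcard hlt hs ht
    refine ⟨s, t, ⟨hlt, ?_⟩, hs, ht⟩
    intro r hr
    have : r ∈ Finset.univ.filter (fun x => P.lt s x ∧ P.lt x t) := by
      simp [hr.1, hr.2]
    have := Finset.card_pos.mpr ⟨r, this⟩
    omega
  | succ n ih =>
    intro s t hcard hlt hs ht
    rcases Finset.eq_empty_or_nonempty
        (Finset.univ.filter (fun x => P.lt s x ∧ P.lt x t)) with hemp | ⟨r, hr⟩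
    · refine ⟨s, t, ⟨hlt, ?_⟩, hs, ht⟩
      intro r hr
      have : r ∈ Finset.univ.filter (fun x => P.lt s x ∧ P.lt x t) := by
        simp [hr.1, hr.2]
      rw [hemp] at this
      exact absurd this (Finset.notMem_empty r)
    · simp only [Finset.mem_filter] at hr
      obtain ⟨-, hsr, hrt⟩ := hr
      by_cases hrU : r ∈ U
      · refine ih s r ?_ hsr hs hrU
        have hsub : Finset.univ.filter (fun x => P.lt s x ∧ P.lt x r) ⊆
            (Finset.univ.filter (fun x => P.lt s x ∧ P.lt x t)).erase r := by
          intro x hx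
          simp only [Finset.mem_filter, Finset.mem_erase] at hx ⊢
          refine ⟨?_, Finset.mem_univ x, hx.2.1, hx.2.2.trans hrt⟩
          rintro rfl
          exact @lt_irrefl _ P.toPreorder x hx.2.2
        have h1 := Finset.card_le_card hsub
        have h2 := Finset.card_erase_of_mem (a := r)
          (s := Finset.univ.filter (fun x => P.lt s x ∧ P.lt x t)) (by simp [hsr, hrt])
        omega
      · refine ih r t ?_ hrt hrU ht
        have hsub : Finset.univ.filter (fun x => P.lt r x ∧ P.lt x t) ⊆
            (Finset.univ.filter (fun x => P.lt s x ∧ P.lt x t)).erase r := by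
          intro x hx
          simp only [Finset.mem_filter, Finset.mem_erase] at hx ⊢
          refine ⟨?_, Finset.mem_univ x, hsr.trans hx.2.1, hx.2.2⟩
          rintro rfl
          exact @lt_irrefl _ P.toPreorder x hx.2.1
        have h1 := Finset.card_le_card hsub
        have h2 := Finset.card_erase_of_mem (a := r)
          (s := Finset.univ.filter (fun x => P.lt s x ∧ P.lt x t)) (by simp [hsr, hrt])
        omega

lemma exists_maxclique {m : ℕ} (G : SimpleGraph (Fin m)) (C : Finset (Fin m))
    (hC : G.IsClique (C : Set (Fin m))) : ∃ S, C ⊆ S ∧ IsMaxClique G S := by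
  have hne : (Finset.univ.filter
      (fun S : Finset (Fin m) => G.IsClique (S : Set (Fin m)) ∧ C ⊆ S)).Nonempty :=
    ⟨C, by simp [hC]⟩
  obtain ⟨S, hSmem, hSmax⟩ := Finset.exists_max_image _ Finset.card hne
  simp only [Finset.mem_filter] at hSmem
  refine ⟨S, hSmem.2.2, hSmem.2.1, ?_⟩
  intro T hT hST
  have hTmem : T ∈ Finset.univ.filter
      (fun S : Finset (Fin m) => G.IsClique (S : Set (Fin m)) ∧ C ⊆ S) := by
    simp [hT, hSmem.2.2.trans hST]
  exact (Finset.eq_of_subset_of_card_le hST (hSmax T hTmem)).symm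

/-- If `L = J(P)` is a natural distributive lattice and the graph `G` contains the minimal
graph of `L`, then `L` is `A_G`-feasible. -/
theorem natural_lattice_is_AG_feasible
    (m : ℕ) (P : PartialOrder (Fin m)) (G : SimpleGraph (Fin m))
    (hmin : minimalGraph P ≤ G) :
    AFeasibleGen (standardMatrix G) (orderIdeals P) := by
  intro U hU hsub
  simp only [orderIdeals, Set.mem_setOf_eq, not_forall] at hU
  obtain ⟨t, ht, s, hst, hs⟩ := hU
  have hne : s ≠ t := by rintro rfl; exact hs ht
  have hlt : P.lt s t := (P.lt_iff_le_not_ge s t).mpr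
    ⟨hst, fun h => hne (P.le_antisymm s t hst h)⟩
  obtain ⟨a, b, hcov, haU, hbU⟩ := exists_cover_cross P U _ s t le_rfl hlt hs ht
  have hab : P.lt a b := hcov.1
  have hneab : a ≠ b := by
    rintro rfl
    exact ((P.lt_iff_le_not_ge a a).mp hab).2 ((P.lt_iff_le_not_ge a a).mp hab).1
  have hadj : G.Adj b a := hmin (Or.inl hcov)
  have hclique : G.IsClique (({a, b} : Finset (Fin m)) : Set (Fin m)) := by
    simp only [Finset.coe_insert, Finset.coe_singleton]
    rw [SimpleGraph.isClique_pair]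
    exact fun _ => hadj.symm
  obtain ⟨S, hCS, hSmax⟩ := exists_maxclique G _ hclique
  have haS : a ∈ S := hCS (by simp)
  have hbS : b ∈ S := hCS (by simp)
  set i₀ : MaxCliquePairs G := ⟨(S, U ∩ S), hSmax, Finset.inter_subset_right⟩ with hi₀
  have h1 : i₀ ∈ {i | standardMatrix G i U ≠ 0} := by
    simp [standardMatrix, hi₀]
    exact rfl
  have h2 := hsub h1
  simp only [Set.mem_iUnion, Set.mem_setOf_eq] at h2
  obtain ⟨W, hW, hWne⟩ := h2
  simp only [standardMatrix, hi₀, ne_eq, ite_eq_right_iff, not_forall] at hWne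
  have hWS : W ∩ S = U ∩ S := hWne.1
  have hbW : b ∈ W := by
    have : b ∈ U ∩ S := Finset.mem_inter.mpr ⟨hbU, hbS⟩
    rw [← hWS] at this
    exact (Finset.mem_inter.mp this).1
  have haW : a ∈ W := hW b hbW a ((P.lt_iff_le_not_ge a b).mp hab).1
  have : a ∈ U ∩ S := by
    rw [← hWS]
    exact Finset.mem_inter.mpr ⟨haW, haS⟩
  exact haU (Finset.mem_inter.mp this).1

end
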